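/- arXiv:math/0611664 — 2 statements merged into one kernel-verified Lean document; each statement's English description precedes it below -/
import Mathlib

section
/- Fix t > 0 and c ≥ 0 with P(X ≥ c) > 0. Let τ(c) := inf{n ≥ 1 : Xₙ ≥ c} and W_c(t) := E[X_{τ(c)} 1(S_{τ(c)} ≤ t)]. Then W_c(t) = (1 − e^{−t·P(X ≥ c)})·E(X | X ≥ c), where E(X | X ≥ c) = E[X 1(X ≥ c)]/P(X ≥ c). -/
open MeasureTheory ProbabilityTheory Real Set

noncomputable section

namespace ProphetPoisson

variable {Ω : Type*} [MeasurableSpace Ω]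

/-- `arrival T k` is the arrival time `S_{k+1} = T₀ + ⋯ + T_k` of the `k`-th observation
(observations are indexed by `k = 0, 1, 2, …`). -/
def arrival (T : ℕ → Ω → ℝ) (k : ℕ) (ω : Ω) : ℝ :=
  ∑ i ∈ Finset.range (k + 1), T i ω

/-- The maximum of all observations `X k` arriving by time `t`
(the maximum of an empty set being `0`); for nonnegative observations this is
`⨆ k, X k · 1(S k ≤ t)`. -/
def maxByT (X T : ℕ → Ω → ℝ) (t : ℝ) (ω : Ω) : ℝ :=
  ⨆ k : ℕ, if arrival T k ω ≤ t then X k ω else 0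

/-- `M(t)`: the expected maximum of the observations arriving by time `t`. -/
def Mval (μ : Measure Ω) (X T : ℕ → Ω → ℝ) (t : ℝ) : ℝ :=
  ∫ ω, maxByT X T t ω ∂μ

/-- The σ-algebra generated by `(X 0, S 0), …, (X i, S i)`. -/
def obsFiltration (X T : ℕ → Ω → ℝ) (i : ℕ) : MeasurableSpace Ω :=
  ⨆ j ∈ Finset.range (i + 1),
    MeasurableSpace.comap (fun ω => (X j ω, arrival T j ω)) inferInstance

/-- A stopping rule: an `ℕ`-valued random variable `τ` such that `{τ = i}` is
measurable w.r.t. the σ-algebra generated by `(X 0, S 0), …, (X i, S i)`. -/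
def IsStopRule (X T : ℕ → Ω → ℝ) (τ : Ω → ℕ) : Prop :=
  ∀ i : ℕ, MeasurableSet[obsFiltration X T i] {ω | τ ω = i}

/-- The reward `X_τ · 1(S_τ ≤ t)` of a stopping rule `τ`. -/
def stopReward (X T : ℕ → Ω → ℝ) (t : ℝ) (τ : Ω → ℕ) (ω : Ω) : ℝ :=
  if arrival T (τ ω) ω ≤ t then X (τ ω) ω else 0

/-- `V(t)`: the optimal stopping value `sup_τ E[X_τ 1(S_τ ≤ t)]`. -/
def Vval (μ : Measure Ω) (X T : ℕ → Ω → ℝ) (t : ℝ) : ℝ :=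
  sSup {v | ∃ τ : Ω → ℕ, IsStopRule X T τ ∧ v = ∫ ω, stopReward X T t τ ω ∂μ}

/-- The threshold rule `τ(c) = inf {n : X n ≥ c}`. -/
def tauC (X : ℕ → Ω → ℝ) (c : ℝ) (ω : Ω) : ℕ := sInf {n : ℕ | c ≤ X n ω}

/-- `W_c(t)`: the expected reward of the threshold rule `τ(c)`. -/
def Wval (μ : Measure Ω) (X T : ℕ → Ω → ℝ) (c t : ℝ) : ℝ :=
  ∫ ω, stopReward X T t (tauC X c) ω ∂μ

/-- `sup_{c ≥ 0} W_c(t)`. -/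
def supW (μ : Measure Ω) (X T : ℕ → Ω → ℝ) (t : ℝ) : ℝ :=
  sSup {w | ∃ c : ℝ, 0 ≤ c ∧ w = Wval μ X T c t}

/-- The basic probabilistic setup: `μ` is a probability measure; the `X k` are i.i.d.;
the `T k` are i.i.d. exponential with rate `1`; and all of the `X k, T k` are jointly
independent (in particular the sequence `{X k}` is independent of the arrival process). -/
structure Setup (μ : Measure Ω) (X T : ℕ → Ω → ℝ) : Prop where
  prob : IsProbabilityMeasure μ
  measX : ∀ i, Measurable (X i)
  measT : ∀ i, Measurable (T i)
  indep : iIndepFun (Sum.elim X T) μ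
  identX : ∀ i, μ.map (X i) = μ.map (X 0)
  expT : ∀ i, μ.map (T i) = expMeasure 1

end ProphetPoisson

/-!
Split the reward of `τ(c)` according to the value `n` of `τ(c)`, which is finite almost surely
because `P(X ≥ c) > 0`. On `{τ(c) = n}` the reward is `X_n 1(X_n ≥ c) ∏_{j<n} 1(X_j < c)` times
`1(S_n ≤ t)`; the first factor depends only on the `X`'s and the second only on the `T`'s, so by
independence the `n`-th layer contributes `q^n E[X; X ≥ c] P(S_n ≤ t)` with `q = P(X < c)`.
The arrival time `S_n` is Erlang of shape `n + 1`, with CDF `1 - e^{-t} ∑_{j ≤ n} t^j / j!`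
(by induction, convolving with `Exp(1)`), and a Cauchy product with the series of `e^{qt}` gives
`∑_n q^n P(S_n ≤ t) = (1 - e^{-pt}) / p` for `p = 1 - q`.
-/

open scoped ENNReal Nat

lemma MeasureTheory.Measure.conv_apply_Iic {ρ ν : Measure ℝ} [SFinite ν] (t : ℝ) :
    (ρ ∗ ν) (Iic t) = ∫⁻ x, ν (Iic (t - x)) ∂ρ := by
  rw [← lintegral_indicator_one measurableSet_Iic,
    Measure.lintegral_conv (measurable_one.indicator measurableSet_Iic)]
  refine lintegral_congr fun x => ?_
  rw [← lintegral_indicator_one measurableSet_Iic]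
  congr 1 with y
  simp only [indicator, mem_Iic, le_sub_iff_add_le', Pi.one_apply]

lemma ProbabilityTheory.iIndepFun.indepFun_sumElim {Ω ι κ β : Type*} [MeasurableSpace Ω]
    [MeasurableSpace β] {μ : Measure Ω} {X : ι → Ω → β} {Y : κ → Ω → β}
    (h : iIndepFun (Sum.elim X Y) μ)
    (hX : ∀ i, Measurable (X i)) (hY : ∀ k, Measurable (Y k)) :
    IndepFun (fun ω i => X i ω) (fun ω k => Y k ω) μ := by
  have h_le : ∀ i, MeasurableSpace.comap (Sum.elim X Y i) inferInstance ≤ ‹_› := by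
    rintro (i | k)
    · exact (hX i).comap_le
    · exact (hY k).comap_le
  have hind := indep_iSup_of_disjoint h_le ((iIndepFun_iff_iIndep _ _ _).1 h)
    (S := range Sum.inl) (T := range Sum.inr) (disjoint_range_iff.2 fun _ _ => Sum.inl_ne_inr)
  rw [IndepFun_iff_Indep]
  refine indep_of_indep_of_le_right (indep_of_indep_of_le_left hind ?_) ?_
  all_goals
    rw [MeasurableSpace.pi, MeasurableSpace.comap_iSup]
    refine iSup_le fun i => ?_
    rw [MeasurableSpace.comap_comp]
  · exact le_iSup₂_of_le (Sum.inl i) (mem_range_self i) le_rfl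
  · exact le_iSup₂_of_le (Sum.inr i) (mem_range_self i) le_rfl

-- Erlang CDF of shape `k`, the law of a sum of `k` i.i.d. `Exp(1)` variables (shape `0` is `δ₀`).
def erlangCDF (k : ℕ) (t : ℝ) : ℝ :=
  if 0 ≤ t then 1 - exp (-t) * ∑ j ∈ Finset.range k, t ^ j / j ! else 0

lemma erlangCDF_of_nonneg (k : ℕ) {t : ℝ} (ht : 0 ≤ t) :
    erlangCDF k t = 1 - exp (-t) * ∑ j ∈ Finset.range k, t ^ j / j ! := if_pos ht

lemma erlangCDF_of_neg (k : ℕ) {t : ℝ} (ht : t < 0) : erlangCDF k t = 0 := if_neg ht.not_ge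

lemma erlangCDF_nonneg (k : ℕ) (t : ℝ) : 0 ≤ erlangCDF k t := by
  rcases lt_or_ge t 0 with ht | ht
  · rw [erlangCDF_of_neg k ht]
  · rw [erlangCDF_of_nonneg k ht, sub_nonneg]
    calc exp (-t) * ∑ j ∈ Finset.range k, t ^ j / j ! ≤ exp (-t) * exp t := by
          gcongr; exact sum_le_exp_of_nonneg ht k
      _ = 1 := by rw [← exp_add, neg_add_cancel, exp_zero]

lemma measurable_erlangCDF (k : ℕ) : Measurable (erlangCDF k) :=
  Measurable.ite measurableSet_Ici (by fun_prop) measurable_const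

lemma exp_neg_mul_erlangCDF_sub_eqOn (k : ℕ) (t : ℝ) :
    EqOn (fun b => exp (-b) * erlangCDF k (t - b))
      (fun b => exp (-b) - exp (-t) * ∑ j ∈ Finset.range k, (t - b) ^ j / j !) (Icc 0 t) := by
  intro b hb
  simp only
  rw [erlangCDF_of_nonneg k (sub_nonneg.2 hb.2), mul_sub, mul_one, ← mul_assoc, ← exp_add]
  ring_nf

lemma integral_exp_neg_mul_erlangCDF_sub (k : ℕ) {t : ℝ} (ht : 0 ≤ t) :
    ∫ b in 0..t, exp (-b) * erlangCDF k (t - b) = erlangCDF (k + 1) t := by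
  have hcongr := exp_neg_mul_erlangCDF_sub_eqOn k t
  rw [← uIcc_of_le ht] at hcongr
  rw [intervalIntegral.integral_congr hcongr]
  have hderiv : ∀ b ∈ uIcc 0 t, HasDerivAt
      (fun b => -exp (-b) + exp (-t) * ∑ j ∈ Finset.range k, (t - b) ^ (j + 1) / (j + 1)!)
      (exp (-b) - exp (-t) * ∑ j ∈ Finset.range k, (t - b) ^ j / j !) b := by
    intro b _
    have hterm : ∀ j ∈ Finset.range k, HasDerivAt (fun b => (t - b) ^ (j + 1) / (j + 1)!)
        (-((t - b) ^ j / j !)) b := by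
      intro j _
      refine ((((hasDerivAt_id b).const_sub t).pow (j + 1)).div_const
        ((j + 1)! : ℝ)).congr_deriv ?_
      rw [Nat.factorial_succ]
      push_cast
      field_simp
      simp
    refine (((hasDerivAt_neg b).exp.neg).add
      ((HasDerivAt.fun_sum hterm).const_mul (exp (-t)))).congr_deriv ?_
    simp only [Finset.sum_neg_distrib]
    ring
  rw [intervalIntegral.integral_eq_sub_of_hasDerivAt hderiv (by
    apply Continuous.intervalIntegrable; fun_prop), erlangCDF_of_nonneg _ ht,
    Finset.sum_range_succ']
  simp only [sub_self, zero_pow (Nat.succ_ne_zero _), zero_div, Finset.sum_const_zero,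
    mul_zero, add_zero, neg_zero, exp_zero, sub_zero, pow_zero, Nat.factorial_zero,
    Nat.cast_one, div_one]
  ring

lemma exponentialPDF_one_mul_erlangCDF_sub (k : ℕ) (t b : ℝ) :
    exponentialPDF 1 b * ENNReal.ofReal (erlangCDF k (t - b)) =
      (Icc 0 t).indicator (fun b => ENNReal.ofReal (exp (-b) * erlangCDF k (t - b))) b := by
  rw [exponentialPDF_eq]
  rcases lt_or_ge b 0 with hb | hb
  · simp [hb.not_ge]
  rcases le_or_gt b t with hbt | hbt
  · rw [indicator_of_mem (show b ∈ Icc 0 t from ⟨hb, hbt⟩), if_pos hb, one_mul, one_mul,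
      ENNReal.ofReal_mul (exp_nonneg _)]
  · rw [indicator_of_notMem (fun h => hbt.not_ge h.2), erlangCDF_of_neg k (by linarith)]
    simp

lemma lintegral_erlangCDF_sub_expMeasure (k : ℕ) (t : ℝ) :
    ∫⁻ b, ENNReal.ofReal (erlangCDF k (t - b)) ∂expMeasure 1 =
      ENNReal.ofReal (erlangCDF (k + 1) t) := by
  have hint : IntegrableOn (fun b => exp (-b) * erlangCDF k (t - b)) (Icc 0 t) :=
    (Continuous.integrableOn_Icc (by fun_prop)).congr_fun
      (exp_neg_mul_erlangCDF_sub_eqOn k t).symm measurableSet_Icc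
  have hmeas : Measurable fun b => ENNReal.ofReal (erlangCDF k (t - b)) :=
    ((measurable_erlangCDF k).comp (measurable_const.sub measurable_id)).ennreal_ofReal
  have hpdf : Measurable (gammaPDF 1 1) := (measurable_gammaPDFReal 1 1).ennreal_ofReal
  rw [expMeasure, gammaMeasure, lintegral_withDensity_eq_lintegral_mul _ hpdf hmeas]
  simp only [Pi.mul_apply]
  simp_rw [show gammaPDF 1 1 = exponentialPDF 1 from rfl, exponentialPDF_one_mul_erlangCDF_sub]
  rw [lintegral_indicator measurableSet_Icc, ← ofReal_integral_eq_lintegral_ofReal hint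
    (ae_restrict_of_forall_mem measurableSet_Icc fun b _ =>
      mul_nonneg (exp_nonneg _) (erlangCDF_nonneg k _))]
  rcases lt_or_ge t 0 with ht | ht
  · rw [Icc_eq_empty ht.not_ge, erlangCDF_of_neg _ ht]
    simp
  · rw [integral_Icc_eq_integral_Ioc, ← intervalIntegral.integral_of_le ht,
      integral_exp_neg_mul_erlangCDF_sub k ht]

section SumOfExponentials

variable {Ω : Type*} [MeasurableSpace Ω] {μ : Measure Ω} {T : ℕ → Ω → ℝ}

lemma measure_sum_range_le_eq_erlangCDF (hT : iIndepFun T μ) (hmeas : ∀ i, Measurable (T i))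
    (hexp : ∀ i, μ.map (T i) = expMeasure 1) (k : ℕ) (t : ℝ) :
    μ {ω | ∑ i ∈ Finset.range k, T i ω ≤ t} = ENNReal.ofReal (erlangCDF k t) := by
  have := hT.isProbabilityMeasure
  have := isProbabilityMeasure_expMeasure zero_lt_one
  induction k generalizing t with
  | zero =>
    rcases lt_or_ge t 0 with ht | ht
    · simp [erlangCDF_of_neg 0 ht, ht.not_ge]
    · simp [erlangCDF_of_nonneg 0 ht, ht]
  | succ k ih =>
    have hS : Measurable (∑ i ∈ Finset.range k, T i) := by fun_prop
    have hlaw : μ.map (∑ i ∈ Finset.range (k + 1), T i) =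
        expMeasure 1 ∗ μ.map (∑ i ∈ Finset.range k, T i) := by
      rw [Finset.sum_range_succ,
        (hT.indepFun_sum_range_succ hmeas k).map_add_eq_map_conv_map hS (hmeas k), hexp k,
        Measure.conv_comm]
    have hset : ∀ s u, {ω | ∑ i ∈ Finset.range s, T i ω ≤ u} =
        (∑ i ∈ Finset.range s, T i) ⁻¹' Iic u := by
      intro s u; ext ω; simp [Finset.sum_apply]
    rw [hset, ← Measure.map_apply (by fun_prop) measurableSet_Iic,
      hlaw, Measure.conv_apply_Iic, ← lintegral_erlangCDF_sub_expMeasure]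
    refine lintegral_congr fun x => ?_
    rw [Measure.map_apply hS measurableSet_Iic, ← hset, ih]

end SumOfExponentials

lemma hasSum_geometric_mul_sum_range_pow_div_factorial {q : ℝ} (hq0 : 0 ≤ q) (hq1 : q < 1)
    (t : ℝ) :
    HasSum (fun n => q ^ n * ∑ j ∈ Finset.range (n + 1), t ^ j / j !) (exp (q * t) / (1 - q)) := by
  have hexp : Summable fun k => ‖(q * t) ^ k / (k !)‖ := (Real.summable_pow_div_factorial _).norm
  have hgeom : Summable fun m => ‖q ^ m‖ := by
    simpa [norm_pow, Real.norm_of_nonneg hq0] using summable_geometric_of_lt_one hq0 hq1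
  have h := hasSum_sum_range_mul_of_summable_norm hexp hgeom
  rw [(NormedSpace.expSeries_div_hasSum_exp (q * t)).tsum_eq, tsum_geometric_of_lt_one hq0 hq1,
    ← Real.exp_eq_exp_ℝ, ← div_eq_mul_inv] at h
  refine h.congr_fun fun n => ?_
  rw [Finset.mul_sum]
  refine Finset.sum_congr rfl fun k hk => ?_
  rw [mul_pow, ← pow_mul_pow_sub q (Nat.lt_succ_iff.mp (Finset.mem_range.mp hk))]
  ring

lemma hasSum_geometric_mul_erlangCDF {p t : ℝ} (hp0 : 0 < p) (hp1 : p ≤ 1) (ht : 0 ≤ t) :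
    HasSum (fun n => (1 - p) ^ n * erlangCDF (n + 1) t) ((1 - exp (-(t * p))) / p) := by
  have hq0 : 0 ≤ 1 - p := by linarith
  have hq1 : 1 - p < 1 := by linarith
  have h := (hasSum_geometric_of_lt_one hq0 hq1).sub
    ((hasSum_geometric_mul_sum_range_pow_div_factorial hq0 hq1 t).mul_left (exp (-t)))
  have hsum : (1 - (1 - p))⁻¹ - exp (-t) * (exp ((1 - p) * t) / (1 - (1 - p))) =
      (1 - exp (-(t * p))) / p := by
    rw [sub_sub_cancel, mul_div_assoc', ← exp_add]
    field_simp
    ring_nf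
  rw [← hsum]
  refine h.congr_fun fun n => ?_
  rw [erlangCDF_of_nonneg _ ht]
  ring

section FirstHit

variable {c : ℝ} {x : ℕ → ℝ}

def firstHitIndicator (c : ℝ) (x : ℕ → ℝ) (n : ℕ) : ℝ≥0∞ :=
  (∏ j ∈ Finset.range n, (Iio c).indicator 1 (x j)) * (Ici c).indicator 1 (x n)

lemma measurable_firstHitIndicator (c : ℝ) (n : ℕ) :
    Measurable fun x : ℕ → ℝ => firstHitIndicator c x n :=
  (Finset.measurable_prod _ fun j _ =>
    (measurable_one.indicator measurableSet_Iio).comp (measurable_pi_apply j)).mul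
    ((measurable_one.indicator measurableSet_Ici).comp (measurable_pi_apply n))

lemma firstHitIndicator_eq_ite (h : ∃ n, c ≤ x n) (n : ℕ) :
    firstHitIndicator c x n = if n = sInf {n | c ≤ x n} then 1 else 0 := by
  have hfirst : c ≤ x (sInf {n | c ≤ x n}) := Nat.sInf_mem h
  rcases lt_trichotomy n (sInf {n | c ≤ x n}) with hn | rfl | hn
  · have : x n < c := not_le.1 (Nat.notMem_of_lt_sInf hn)
    simp [firstHitIndicator, hn.ne, this.not_ge]
  · rw [firstHitIndicator, if_pos rfl, indicator_of_mem (show x _ ∈ Ici c from hfirst),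
      Pi.one_apply, mul_one]
    refine Finset.prod_eq_one fun j hj => ?_
    have : x j < c := not_le.1 (Nat.notMem_of_lt_sInf (Finset.mem_range.1 hj))
    rw [indicator_of_mem (show x j ∈ Iio c from this), Pi.one_apply]
  · have hzero : (Iio c).indicator (1 : ℝ → ℝ≥0∞) (x (sInf {n | c ≤ x n})) = 0 :=
      indicator_of_notMem (show x _ ∉ Iio c from not_lt.2 hfirst) _
    rw [firstHitIndicator, if_neg hn.ne', Finset.prod_eq_zero (Finset.mem_range.2 hn) hzero,
      zero_mul]

lemma tsum_firstHitIndicator_mul (h : ∃ n, c ≤ x n) (b : ℕ → ℝ≥0∞) :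
    ∑' n, firstHitIndicator c x n * b n = b (sInf {n | c ≤ x n}) := by
  simp_rw [firstHitIndicator_eq_ite h, ite_mul, one_mul, zero_mul]
  exact tsum_ite_eq _ _

end FirstHit

section IID

variable {Ω : Type*} [MeasurableSpace Ω] {μ : Measure Ω} {X : ℕ → Ω → ℝ}

lemma lintegral_indicator_comp {f : Ω → ℝ} (hf : Measurable f) {s : Set ℝ} (hs : MeasurableSet s)
    (g : ℝ → ℝ≥0∞) : ∫⁻ ω, s.indicator g (f ω) ∂μ = ∫⁻ ω in f ⁻¹' s, g (f ω) ∂μ := by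
  rw [← lintegral_indicator (hf hs)]
  rfl

lemma lintegral_firstHitIndicator_mul (hX : iIndepFun X μ) (hmeas : ∀ i, Measurable (X i))
    (hident : ∀ i, μ.map (X i) = μ.map (X 0)) (c : ℝ) (n : ℕ) {f : ℝ → ℝ≥0∞}
    (hf : Measurable f) :
    ∫⁻ ω, firstHitIndicator c (X · ω) n * f (X n ω) ∂μ =
      μ (X 0 ⁻¹' Iio c) ^ n * ∫⁻ ω in X 0 ⁻¹' Ici c, f (X 0 ω) ∂μ := by
  set g : ℕ → ℝ → ℝ≥0∞ := fun j => if j = n then (Ici c).indicator f else (Iio c).indicator 1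
  have hg : ∀ j, Measurable (g j) := by
    intro j
    by_cases hj : j = n
    · simpa [g, hj] using hf.indicator measurableSet_Ici
    · simpa [g, hj] using measurable_one.indicator measurableSet_Iio
  have hprod : ∀ ω, firstHitIndicator c (X · ω) n * f (X n ω) =
      ∏ j ∈ Finset.range (n + 1), g j (X j ω) := by
    intro ω
    rw [Finset.prod_range_succ, firstHitIndicator, mul_assoc]
    congr 1
    · exact Finset.prod_congr rfl fun j hj => by simp [g, (Finset.mem_range.1 hj).ne]
    · simp only [g, if_pos rfl, indicator, Pi.one_apply]
      split_ifs <;> simp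
  have hlaw : ∀ j, ∫⁻ ω, g j (X j ω) ∂μ = ∫⁻ ω, g j (X 0 ω) ∂μ := fun j =>
    (IdentDistrib.comp ⟨(hmeas j).aemeasurable, (hmeas 0).aemeasurable, hident j⟩
      (hg j)).lintegral_eq
  simp_rw [hprod]
  refine (lintegral_prod_eq_prod_lintegral_of_indepFun _ (fun j ω => g j (X j ω)) (hX.comp g hg)
    (fun j => (hg j).comp (hmeas j))).trans ?_
  rw [Finset.prod_range_succ]
  simp only [hlaw]
  congr 1
  · rw [Finset.prod_congr rfl (g := fun _ => μ (X 0 ⁻¹' Iio c)), Finset.prod_const,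
      Finset.card_range]
    intro j hj
    simp only [g, if_neg (Finset.mem_range.1 hj).ne]
    rw [lintegral_indicator_comp (hmeas 0) measurableSet_Iio, Pi.one_def, setLIntegral_const,
      one_mul]
  · simp only [g, if_pos rfl]
    exact lintegral_indicator_comp (hmeas 0) measurableSet_Ici f

lemma ae_exists_le_of_iIndepFun (hX : iIndepFun X μ) (hmeas : ∀ i, Measurable (X i))
    (hident : ∀ i, μ.map (X i) = μ.map (X 0)) {c : ℝ} (hpos : 0 < μ (X 0 ⁻¹' Ici c)) :
    ∀ᵐ ω ∂μ, ∃ n, c ≤ X n ω := by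
  have := hX.isProbabilityMeasure
  have hlt : μ (X 0 ⁻¹' Iio c) < 1 := by
    rw [← compl_Ici, preimage_compl, prob_compl_eq_one_sub (hmeas 0 measurableSet_Ici)]
    exact ENNReal.sub_lt_self ENNReal.one_ne_top one_ne_zero hpos.ne'
  have hbound : ∀ m, μ {ω | ∀ n, X n ω < c} ≤ μ (X 0 ⁻¹' Iio c) ^ m := fun m =>
    calc μ {ω | ∀ n, X n ω < c} ≤ μ (⋂ j ∈ Finset.range m, X j ⁻¹' Iio c) :=
          measure_mono fun ω hω => mem_iInter₂.2 fun j _ => hω j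
      _ = ∏ j ∈ Finset.range m, μ (X j ⁻¹' Iio c) :=
          hX.measure_inter_preimage_eq_mul _ fun _ _ => measurableSet_Iio
      _ = μ (X 0 ⁻¹' Iio c) ^ m := by
          rw [Finset.prod_congr rfl (g := fun _ => μ (X 0 ⁻¹' Iio c)), Finset.prod_const,
            Finset.card_range]
          intro j _
          rw [← Measure.map_apply (hmeas j) measurableSet_Iio, hident j,
            Measure.map_apply (hmeas 0) measurableSet_Iio]
  rw [ae_iff]
  simp only [not_exists, not_le]
  exact le_antisymm
    (ge_of_tendsto' (ENNReal.tendsto_pow_atTop_nhds_zero_of_lt_one hlt) hbound) bot_le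

end IID

namespace ProphetPoisson

lemma stopReward_nonneg {Ω : Type*} {X T : ℕ → Ω → ℝ} (hXnn : ∀ i ω, 0 ≤ X i ω) {t : ℝ}
    (τ : Ω → ℕ) (ω : Ω) :
    0 ≤ stopReward X T t τ ω := by
  unfold stopReward
  split_ifs
  exacts [hXnn _ ω, le_rfl]

variable {Ω : Type*} [MeasurableSpace Ω] {μ : Measure Ω} {X T : ℕ → Ω → ℝ}

lemma Setup.iIndepFun_X (h : Setup μ X T) : iIndepFun X μ := by
  simpa using h.indep.precomp Sum.inl_injective

lemma Setup.iIndepFun_T (h : Setup μ X T) : iIndepFun T μ := by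
  simpa using h.indep.precomp Sum.inr_injective

lemma Setup.indepFun_X_T (h : Setup μ X T) :
    IndepFun (fun ω i => X i ω) (fun ω i => T i ω) μ :=
  h.indep.indepFun_sumElim h.measX h.measT

lemma measurable_arrival (hT : ∀ i, Measurable (T i)) (n : ℕ) : Measurable (arrival T n) :=
  Finset.measurable_sum _ fun i _ => hT i

lemma Setup.measure_arrival_le (h : Setup μ X T) (n : ℕ) (t : ℝ) :
    μ {ω | arrival T n ω ≤ t} = ENNReal.ofReal (erlangCDF (n + 1) t) :=
  measure_sum_range_le_eq_erlangCDF h.iIndepFun_T h.measT h.expT (n + 1) t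

lemma Setup.lintegral_firstHitIndicator_mul_stopReward (h : Setup μ X T) (c t : ℝ) (n : ℕ) :
    ∫⁻ ω, firstHitIndicator c (X · ω) n *
        ENNReal.ofReal (stopReward X T t (fun _ => n) ω) ∂μ =
      μ {ω | X 0 ω < c} ^ n * (∫⁻ ω in {ω | c ≤ X 0 ω}, ENNReal.ofReal (X 0 ω) ∂μ) *
        ENNReal.ofReal (erlangCDF (n + 1) t) := by
  set F : (ℕ → ℝ) → ℝ≥0∞ := fun x => firstHitIndicator c x n * ENNReal.ofReal (x n)
  set G : (ℕ → ℝ) → ℝ≥0∞ := fun y => (Iic t).indicator 1 (∑ i ∈ Finset.range (n + 1), y i)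
  have hF : Measurable F := (measurable_firstHitIndicator c n).mul
    (ENNReal.measurable_ofReal.comp (measurable_pi_apply n))
  have hG : Measurable G := (measurable_one.indicator measurableSet_Iic).comp
    (Finset.measurable_sum _ fun i _ => measurable_pi_apply i)
  have hsplit : ∀ ω, firstHitIndicator c (X · ω) n *
      ENNReal.ofReal (stopReward X T t (fun _ => n) ω) =
      F (fun i => X i ω) * G (fun i => T i ω) := by
    intro ω
    by_cases hle : arrival T n ω ≤ t
    · have hmem : ∑ i ∈ Finset.range (n + 1), T i ω ∈ Iic t := hle
      simp [F, G, stopReward, hle, hmem]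
    · have hmem : ∑ i ∈ Finset.range (n + 1), T i ω ∉ Iic t := hle
      simp [F, G, stopReward, hle, hmem]
  simp_rw [hsplit]
  refine (lintegral_mul_eq_lintegral_mul_lintegral_of_indepFun''
    (hF.comp (measurable_pi_lambda _ h.measX)).aemeasurable
    (hG.comp (measurable_pi_lambda _ h.measT)).aemeasurable (h.indepFun_X_T.comp hF hG)).trans ?_
  congr 1
  · exact lintegral_firstHitIndicator_mul h.iIndepFun_X h.measX h.identX c n
      ENNReal.measurable_ofReal
  · rw [← h.measure_arrival_le]
    change ∫⁻ ω, (Iic t).indicator 1 (arrival T n ω) ∂μ = _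
    rw [lintegral_indicator_comp (measurable_arrival h.measT n) measurableSet_Iic, Pi.one_def,
      setLIntegral_const, one_mul]
    rfl

lemma Setup.measurable_firstHitIndicator_mul_stopReward (h : Setup μ X T) (c t : ℝ) (n : ℕ) :
    Measurable fun ω => firstHitIndicator c (X · ω) n *
      ENNReal.ofReal (stopReward X T t (fun _ => n) ω) :=
  ((measurable_firstHitIndicator c n).comp (measurable_pi_lambda _ h.measX)).mul
    (Measurable.ite (measurableSet_le (measurable_arrival h.measT n) measurable_const)
      (h.measX n) measurable_const).ennreal_ofReal

lemma Setup.ofReal_stopReward_tauC_ae_eq (h : Setup μ X T) {c : ℝ}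
    (hpos : 0 < μ {ω | c ≤ X 0 ω}) (t : ℝ) :
    (fun ω => ENNReal.ofReal (stopReward X T t (tauC X c) ω)) =ᵐ[μ]
      fun ω => ∑' n, firstHitIndicator c (X · ω) n *
        ENNReal.ofReal (stopReward X T t (fun _ => n) ω) := by
  filter_upwards [ae_exists_le_of_iIndepFun h.iIndepFun_X h.measX h.identX hpos] with ω hω
  exact (tsum_firstHitIndicator_mul hω fun n =>
    ENNReal.ofReal (stopReward X T t (fun _ => n) ω)).symm

lemma Setup.lintegral_ofReal_stopReward_tauC_eq_tsum (h : Setup μ X T) {c : ℝ}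
    (hpos : 0 < μ {ω | c ≤ X 0 ω}) (t : ℝ) :
    ∫⁻ ω, ENNReal.ofReal (stopReward X T t (tauC X c) ω) ∂μ =
      ∑' n, μ {ω | X 0 ω < c} ^ n * (∫⁻ ω in {ω | c ≤ X 0 ω}, ENNReal.ofReal (X 0 ω) ∂μ) *
        ENNReal.ofReal (erlangCDF (n + 1) t) := by
  rw [lintegral_congr_ae (h.ofReal_stopReward_tauC_ae_eq hpos t),
    lintegral_tsum fun n => (h.measurable_firstHitIndicator_mul_stopReward c t n).aemeasurable]
  exact tsum_congr (h.lintegral_firstHitIndicator_mul_stopReward c t)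

lemma Setup.aestronglyMeasurable_stopReward_tauC (h : Setup μ X T) (hXnn : ∀ i ω, 0 ≤ X i ω)
    {c : ℝ} (hpos : 0 < μ {ω | c ≤ X 0 ω}) (t : ℝ) :
    AEStronglyMeasurable (stopReward X T t (tauC X c)) μ := by
  have hmeas : Measurable fun ω => ∑' n, firstHitIndicator c (X · ω) n *
      ENNReal.ofReal (stopReward X T t (fun _ => n) ω) :=
    Measurable.tsum fun n => h.measurable_firstHitIndicator_mul_stopReward c t n
  refine hmeas.ennreal_toReal.aestronglyMeasurable.congr ?_
  filter_upwards [h.ofReal_stopReward_tauC_ae_eq hpos t] with ω hω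
  rw [← hω, ENNReal.toReal_ofReal (stopReward_nonneg hXnn _ ω)]

lemma Setup.lintegral_ofReal_stopReward_tauC (h : Setup μ X T) (hXnn : ∀ i ω, 0 ≤ X i ω)
    (hXint : Integrable (X 0) μ) {t : ℝ} (ht : 0 ≤ t) {c : ℝ} (hpos : 0 < μ {ω | c ≤ X 0 ω}) :
    ∫⁻ ω, ENNReal.ofReal (stopReward X T t (tauC X c) ω) ∂μ =
      ENNReal.ofReal ((∫ ω in {ω | c ≤ X 0 ω}, X 0 ω ∂μ) *
        ((1 - exp (-(t * (μ {ω | c ≤ X 0 ω}).toReal))) / (μ {ω | c ≤ X 0 ω}).toReal)) := by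
  have := h.prob
  set p := (μ {ω | c ≤ X 0 ω}).toReal
  set J := ∫ ω in {ω | c ≤ X 0 ω}, X 0 ω ∂μ
  have hp0 : 0 < p := ENNReal.toReal_pos hpos.ne' (measure_ne_top μ _)
  have hp1 : p ≤ 1 := ENNReal.toReal_le_of_le_ofReal zero_le_one (by simpa using prob_le_one)
  have hJ : 0 ≤ J := setIntegral_nonneg_of_ae (ae_of_all _ (hXnn 0))
  have hmiss : μ {ω | X 0 ω < c} = ENNReal.ofReal (1 - p) := by
    have hcompl : {ω | X 0 ω < c} = {ω | c ≤ X 0 ω}ᶜ := by ext; simp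
    rw [hcompl, prob_compl_eq_one_sub (s := {ω | c ≤ X 0 ω}) (h.measX 0 measurableSet_Ici),
      ENNReal.ofReal_sub _ hp0.le, ENNReal.ofReal_one, ENNReal.ofReal_toReal (measure_ne_top μ _)]
  have hI : ∫⁻ ω in {ω | c ≤ X 0 ω}, ENNReal.ofReal (X 0 ω) ∂μ = ENNReal.ofReal J :=
    (ofReal_integral_eq_lintegral_ofReal hXint.integrableOn (ae_of_all _ (hXnn 0))).symm
  have hseries := (hasSum_geometric_mul_erlangCDF hp0 hp1 ht).mul_left J
  rw [h.lintegral_ofReal_stopReward_tauC_eq_tsum hpos t, hmiss, hI, ← hseries.tsum_eq,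
    ENNReal.ofReal_tsum_of_nonneg
      (fun n => mul_nonneg hJ (mul_nonneg (pow_nonneg (by linarith) n) (erlangCDF_nonneg _ _)))
      hseries.summable]
  refine tsum_congr fun n => ?_
  rw [ENNReal.ofReal_mul hJ, ENNReal.ofReal_mul (by positivity), ENNReal.ofReal_pow (by linarith)]
  ring

end ProphetPoisson

open ProphetPoisson in
theorem Wval_eq_threshold_formula_general
    {Ω : Type*} [MeasurableSpace Ω] (μ : Measure Ω) (X T : ℕ → Ω → ℝ)
    (hsetup : Setup μ X T)
    (hXnn : ∀ i ω, 0 ≤ X i ω) (hXint : Integrable (X 0) μ)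
    (t : ℝ) (ht : 0 < t) (c : ℝ)
    (hpos : 0 < μ {ω | c ≤ X 0 ω}) :
    Wval μ X T c t =
      (1 - Real.exp (-(t * (μ {ω | c ≤ X 0 ω}).toReal))) *
        ((∫ ω in {ω | c ≤ X 0 ω}, X 0 ω ∂μ) / (μ {ω | c ≤ X 0 ω}).toReal) := by
  rw [Wval, integral_eq_lintegral_of_nonneg_ae (ae_of_all _ (stopReward_nonneg hXnn _))
    (hsetup.aestronglyMeasurable_stopReward_tauC hXnn hpos t),
    hsetup.lintegral_ofReal_stopReward_tauC hXnn hXint ht.le hpos, ENNReal.toReal_ofReal]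
  · ring
  · exact mul_nonneg (setIntegral_nonneg_of_ae (ae_of_all _ (hXnn 0))) (div_nonneg
      (sub_nonneg.2 (exp_le_one_iff.2 (neg_nonpos.2 (by positivity)))) ENNReal.toReal_nonneg)

open ProphetPoisson in
/-- for `t > 0` and `c ≥ 0` with `P(X ≥ c) > 0`,
`W_c(t) = (1 − e^{−t·P(X ≥ c)})·E(X | X ≥ c)`. -/
theorem Wval_eq_threshold_formula
    {Ω : Type*} [MeasurableSpace Ω] (μ : Measure Ω) (X T : ℕ → Ω → ℝ)
    (hsetup : Setup μ X T)
    (hXnn : ∀ i ω, 0 ≤ X i ω) (hXint : Integrable (X 0) μ)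
    (hXne : μ {ω | X 0 ω = 0} < 1)
    (t : ℝ) (ht : 0 < t) (c : ℝ) (hc : 0 ≤ c)
    (hpos : 0 < μ {ω | c ≤ X 0 ω}) :
    Wval μ X T c t =
      (1 - Real.exp (-(t * (μ {ω | c ≤ X 0 ω}).toReal))) *
        ((∫ ω in {ω | c ≤ X 0 ω}, X 0 ω ∂μ) / (μ {ω | c ≤ X 0 ω}).toReal) :=
  Wval_eq_threshold_formula_general μ X T hsetup hXnn hXint t ht c hpos
end
end

section
/- Suppose X takes only the finitely many values a₁ < a₂ < ⋯ < aₙ, where a₁ ≥ 0. Set a₀ := 0 and rᵢ := P(X ≥ aᵢ) for i = 1, …, n. Then for all t ≥ 0, M(t) = Σ_{i=1}^{n} (aᵢ − a_{i−1})·(1 − e^{−rᵢ t}). -/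
open MeasureTheory ProbabilityTheory Real Set

noncomputable section

/-!
The maximum of the observations that have arrived by time `t` only takes the values
`0 = a₀ ≤ a₁ < ⋯ < aₙ`, so it equals `∑ᵢ (aᵢ - aᵢ₋₁) · 1{max ≥ aᵢ}`, and `M(t)` is
`∑ᵢ (aᵢ - aᵢ₋₁) · P(some observation ≥ aᵢ arrives by time t)`.

Fix a level `c`, let `r = P(X ≥ c)` and `q = 1 - r`. Since the arrival times are nondecreasing, an
observation `≥ c` arrives by time `t` iff the first one does. Its index is `m` with probability
`qᵐ r`, independently of the arrival time `Sₘ`, which is Erlang(m + 1) distributed (a sum of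
independent exponentials). As `∑ₘ qᵐ r · uᵐ e⁻ᵘ / m! = r e^{-r u}`, the arrival time of the first
observation `≥ c` is exponential with rate `r`, and the probability is `1 - e^{-r t}`.
-/

open Filter Function
open scoped Nat

namespace ProbabilityTheory

lemma gammaPDF_natCast_add_one (m : ℕ) (u : ℝ) :
    gammaPDF (m + 1) 1 u = ENNReal.ofReal (if 0 ≤ u then u ^ m * exp (-u) / m ! else 0) := by
  rw [gammaPDF_eq]
  congr 1
  split_ifs
  · rw [one_rpow, Real.Gamma_nat_eq_factorial, add_sub_cancel_right, rpow_natCast, one_mul]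
    ring
  · rfl

lemma measurable_gammaPDF (a r : ℝ) : Measurable (gammaPDF a r) :=
  (measurable_gammaPDFReal a r).ennreal_ofReal

lemma gammaPDF_lconvolution_exponentialPDF (m : ℕ) :
    gammaPDF (m + 1) 1 ⋆ₗ exponentialPDF 1 = gammaPDF ((m + 1 : ℕ) + 1) 1 := by
  ext w
  have hpt : ∀ y, gammaPDF (m + 1) 1 y * exponentialPDF 1 (-y + w) =
      (Icc 0 w).indicator (fun y => ENNReal.ofReal (y ^ m * (exp (-w) / m !))) y := by
    intro y
    rw [gammaPDF_natCast_add_one, exponentialPDF_eq, indicator_apply]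
    by_cases hy : 0 ≤ y <;> by_cases hyw : y ≤ w
    · rw [if_pos hy, if_pos (by linarith), if_pos ⟨hy, hyw⟩,
        ← ENNReal.ofReal_mul (by positivity), one_mul, one_mul]
      congr 1
      rw [show -w = -y + -(-y + w) by ring, exp_add]
      ring
    · simp [mem_Icc, hyw, show ¬ 0 ≤ -y + w by linarith]
    all_goals simp [mem_Icc, hy]
  rw [lconvolution_def]
  simp_rw [hpt]
  rw [lintegral_indicator measurableSet_Icc]
  rcases le_or_gt 0 w with hw | hw
  · rw [← ofReal_integral_eq_lintegral_ofReal, integral_Icc_eq_integral_Ioc,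
      ← intervalIntegral.integral_of_le hw, intervalIntegral.integral_mul_const, integral_pow,
      gammaPDF_natCast_add_one, if_pos hw]
    · congr 1
      rw [Nat.factorial_succ]
      push_cast
      field_simp
      ring
    · exact (continuous_pow m |>.mul continuous_const).integrableOn_Icc
    · exact (ae_restrict_iff' measurableSet_Icc).2 (ae_of_all _ fun y hy => by
        have := hy.1; positivity)
  · rw [Icc_eq_empty (not_le.2 hw), Measure.restrict_empty, lintegral_zero_measure,
      gammaPDF_of_neg hw]

lemma gammaMeasure_conv_expMeasure (m : ℕ) :
    gammaMeasure (m + 1) 1 ∗ expMeasure 1 = gammaMeasure ((m + 1 : ℕ) + 1) 1 := by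
  rw [expMeasure, gammaMeasure, gammaMeasure, gammaMeasure,
    conv_withDensity_eq_lconvolution (measurable_gammaPDF _ _) (measurable_gammaPDF _ _)]
  exact congrArg _ (gammaPDF_lconvolution_exponentialPDF m)

lemma expMeasure_real_Iic {r t : ℝ} (hr : 0 ≤ r) (ht : 0 ≤ t) :
    (expMeasure r).real (Iic t) = 1 - exp (-(r * t)) := by
  rcases hr.lt_or_eq with hr | rfl
  · have := isProbabilityMeasure_expMeasure hr
    rw [← cdf_eq_real, cdf_expMeasure_eq hr, if_pos ht]
  · have : gammaPDF 1 0 = 0 := funext fun x => by simp [gammaPDF_eq]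
    simp [expMeasure, gammaMeasure, this]

lemma tsum_geometric_mul_gammaPDF_eq_exponentialPDF {q r : ℝ} (hq : 0 ≤ q) (hr : 0 ≤ r)
    (hqr : q + r = 1) (u : ℝ) :
    ∑' m : ℕ, ENNReal.ofReal (q ^ m * r) * gammaPDF (m + 1) 1 u = exponentialPDF r u := by
  rcases le_or_gt 0 u with hu | hu
  · have hterm : ∀ m : ℕ, ENNReal.ofReal (q ^ m * r) * gammaPDF (m + 1) 1 u =
        ENNReal.ofReal (r * exp (-u) * ((q * u) ^ m / m !)) := by
      intro m
      rw [gammaPDF_natCast_add_one, if_pos hu, ← ENNReal.ofReal_mul (by positivity), mul_pow]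
      ring_nf
    simp_rw [hterm]
    rw [← ENNReal.ofReal_tsum_of_nonneg (fun m => by positivity)
      ((Real.summable_pow_div_factorial _).mul_left _),
      ((NormedSpace.expSeries_div_hasSum_exp (q * u)).mul_left _).tsum_eq, ← Real.exp_eq_exp_ℝ,
      mul_assoc, ← exp_add, exponentialPDF_of_nonneg hu,
      show -u + q * u = -(r * u) by linear_combination u * hqr]
  · simp [gammaPDF_of_neg hu, exponentialPDF_of_neg hu]

lemma iIndepFun.indepFun_sumElim_s14 {Ω ι κ β : Type*} [MeasurableSpace Ω] {μ : Measure Ω}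
    [MeasurableSpace β] {f : ι → Ω → β} {g : κ → Ω → β} (h : iIndepFun (Sum.elim f g) μ)
    (hf : ∀ i, Measurable (f i)) (hg : ∀ j, Measurable (g j)) :
    IndepFun (fun ω i => f i ω) (fun ω j => g j ω) μ := by
  have hle : ∀ i, MeasurableSpace.comap (Sum.elim f g i) ‹_› ≤ ‹MeasurableSpace Ω› := by
    rintro (i | j)
    exacts [(hf i).comap_le, (hg j).comap_le]
  rw [IndepFun_iff_Indep]
  convert indep_iSup_of_disjoint hle h.iIndep isCompl_range_inl_range_inr.disjoint using 1 <;>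
    simp only [iSup_range] <;>
    simp [MeasurableSpace.pi, MeasurableSpace.comap_iSup, MeasurableSpace.comap_comp, comp_def]

end ProbabilityTheory

lemma sub_eq_sum_Icc_ite_le {a : ℕ → ℝ} {n : ℕ} (ha : MonotoneOn a (Iic n)) {y : ℝ}
    (hy : y ∈ a '' Iic n) :
    y - a 0 = ∑ i ∈ Finset.Icc 1 n, if a i ≤ y then a i - a (i - 1) else 0 := by
  induction n generalizing y with
  | zero =>
    obtain ⟨j, hj, rfl⟩ := hy
    rw [Nat.le_zero.1 hj, sub_self]
    rfl
  | succ n ih =>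
    obtain ⟨j, hj, rfl⟩ := hy
    have ha' : MonotoneOn a (Iic n) := ha.mono (Iic_subset_Iic.2 n.le_succ)
    have hnn : a n ≤ a (n + 1) := ha (mem_Iic.2 n.le_succ) self_mem_Iic n.le_succ
    rw [Finset.sum_Icc_succ_top (by omega), Nat.add_sub_cancel]
    split_ifs with htop
    · have hj : a j = a (n + 1) := le_antisymm (ha hj self_mem_Iic hj) htop
      have hsum : (∑ i ∈ Finset.Icc 1 n, if a i ≤ a j then a i - a (i - 1) else 0) =
          ∑ i ∈ Finset.Icc 1 n, if a i ≤ a n then a i - a (i - 1) else 0 :=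
        Finset.sum_congr rfl fun i hi => by
          have hin : a i ≤ a n :=
            ha' (mem_Iic.2 (Finset.mem_Icc.1 hi).2) self_mem_Iic (Finset.mem_Icc.1 hi).2
          rw [if_pos hin, if_pos (hin.trans (hnn.trans hj.ge))]
      rw [hsum, ← ih ha' ⟨n, self_mem_Iic, rfl⟩, hj]
      ring
    · have hjn : j ≤ n := by
        rcases (mem_Iic.1 hj).lt_or_eq with hlt | rfl
        exacts [Nat.le_of_lt_succ hlt, absurd le_rfl htop]
      rw [add_zero, ih ha' ⟨j, hjn, rfl⟩]

namespace ProphetPoisson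

section MaxByT

variable {Ω : Type*} {X T : ℕ → Ω → ℝ} {t : ℝ} {ω : Ω}

lemma finite_range_arrived (hfin : (range fun k => X k ω).Finite) :
    (range fun k => if arrival T k ω ≤ t then X k ω else 0).Finite :=
  (hfin.insert 0).subset <| range_subset_iff.2 fun k => by split_ifs <;> simp

lemma maxByT_mem_range (hfin : (range fun k => X k ω).Finite) :
    maxByT X T t ω ∈ range fun k => if arrival T k ω ≤ t then X k ω else 0 :=
  (range_nonempty _).csSup_mem (finite_range_arrived hfin)

lemma le_maxByT_iff (hfin : (range fun k => X k ω).Finite) {c : ℝ} (hc : 0 < c) :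
    c ≤ maxByT X T t ω ↔ ∃ k, arrival T k ω ≤ t ∧ c ≤ X k ω := by
  constructor
  · intro hle
    obtain ⟨k, hk⟩ := maxByT_mem_range (T := T) (t := t) hfin
    refine ⟨k, ?_⟩
    dsimp only at hk
    split_ifs at hk with harr
    · exact ⟨harr, hk ▸ hle⟩
    · exact absurd (hk ▸ hle) hc.not_ge
  · rintro ⟨k, harr, hck⟩
    exact le_ciSup_of_le (finite_range_arrived hfin).bddAbove k (by rwa [if_pos harr])

lemma maxByT_eq_sum_indicator {a : ℕ → ℝ} {n : ℕ} (ha : MonotoneOn a (Iic n)) (ha0 : a 0 = 0)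
    (hX : ∀ k, X k ω ∈ a '' Iic n) :
    maxByT X T t ω = ∑ i ∈ Finset.Icc 1 n,
      {ω | ∃ k, arrival T k ω ≤ t ∧ a i ≤ X k ω}.indicator (fun _ => a i - a (i - 1)) ω := by
  classical
  have hfin : (range fun k => X k ω).Finite :=
    ((finite_Iic n).image a).subset (range_subset_iff.2 hX)
  have hmem : maxByT X T t ω ∈ a '' Iic n := by
    obtain ⟨k, hk⟩ := maxByT_mem_range (T := T) (t := t) hfin
    rw [← hk]
    dsimp only
    split_ifs
    exacts [hX k, ⟨0, mem_Iic.2 (Nat.zero_le n), ha0⟩]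
  rw [← sub_zero (maxByT X T t ω), ← ha0, sub_eq_sum_Icc_ite_le ha hmem]
  refine Finset.sum_congr rfl fun i hi => ?_
  obtain ⟨hi1, hin⟩ := Finset.mem_Icc.1 hi
  rcases le_or_gt (a i) 0 with hai | hai
  · have h0 : a 0 ≤ a (i - 1) :=
      ha (mem_Iic.2 (Nat.zero_le n)) (mem_Iic.2 (by omega)) (Nat.zero_le _)
    have h1 : a (i - 1) ≤ a i := ha (mem_Iic.2 (by omega)) (mem_Iic.2 hin) (Nat.sub_le i 1)
    have hstep : a i - a (i - 1) = 0 := by linarith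
    simp [hstep]
  · exact if_congr (le_maxByT_iff hfin hai) rfl rfl

end MaxByT

lemma arrival_succ {Ω : Type*} (T : ℕ → Ω → ℝ) (k : ℕ) (ω : Ω) :
    arrival T (k + 1) ω = arrival T k ω + T (k + 1) ω :=
  Finset.sum_range_succ (fun i => T i ω) (k + 1)

def firstAtLeast (c : ℝ) (m : ℕ) : Set (ℕ → ℝ) :=
  {x | (∀ j < m, x j < c) ∧ c ≤ x m}

lemma measurableSet_firstAtLeast (c : ℝ) (m : ℕ) : MeasurableSet (firstAtLeast c m) := by
  simp only [firstAtLeast, ofPred_and, ofPred_forall]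
  exact (MeasurableSet.iInter fun j => MeasurableSet.iInter fun _ =>
    measurableSet_lt (measurable_pi_apply j) measurable_const).inter
    (measurableSet_le measurable_const (measurable_pi_apply m))

lemma pairwise_disjoint_firstAtLeast (c : ℝ) : Pairwise (Disjoint on firstAtLeast c) := by
  intro m m' hmm'
  refine Set.disjoint_left.2 fun x hx hx' => ?_
  rcases hmm'.lt_or_gt with hlt | hlt
  · exact (hx'.1 m hlt).not_ge hx.2
  · exact (hx.1 m' hlt).not_ge hx'.2

lemma exists_le_and_le_iff_exists_firstAtLeast {x s : ℕ → ℝ} (hs : Monotone s) (c t : ℝ) :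
    (∃ k, s k ≤ t ∧ c ≤ x k) ↔ ∃ m, x ∈ firstAtLeast c m ∧ s m ≤ t := by
  constructor
  · rintro ⟨k, hsk, hxk⟩
    have hex : ∃ k, c ≤ x k := ⟨k, hxk⟩
    refine ⟨Nat.find hex, ⟨fun j hj => not_le.1 (Nat.find_min hex hj), Nat.find_spec hex⟩,
      (hs (Nat.find_min' hex hxk)).trans hsk⟩
  · rintro ⟨m, hm, hsm⟩
    exact ⟨m, hsm, hm.2⟩

section Measure

variable {Ω : Type*} [MeasurableSpace Ω] {μ : Measure Ω} {X T : ℕ → Ω → ℝ}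

namespace Setup

lemma iIndepFun_X_s14 (h : Setup μ X T) : iIndepFun X μ :=
  h.indep.precomp (g := Sum.inl) Sum.inl_injective

lemma iIndepFun_T_s14 (h : Setup μ X T) : iIndepFun T μ :=
  h.indep.precomp (g := Sum.inr) Sum.inr_injective

lemma indepFun_seq (h : Setup μ X T) :
    IndepFun (fun ω k => X k ω) (fun ω k => T k ω) μ :=
  h.indep.indepFun_sumElim_s14 h.measX h.measT

lemma measurable_arrival (h : Setup μ X T) (k : ℕ) : Measurable (arrival T k) :=
  Finset.measurable_sum _ fun i _ => h.measT i

lemma map_arrival (h : Setup μ X T) : ∀ m : ℕ, μ.map (arrival T m) = gammaMeasure (m + 1) 1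
  | 0 => by
    have : arrival T 0 = T 0 := funext fun ω => Finset.sum_range_one fun i => T i ω
    rw [this, h.expT, expMeasure, Nat.cast_zero, zero_add]
  | m + 1 => by
    have := h.prob
    have hsum : arrival T (m + 1) = arrival T m + T (m + 1) := funext (arrival_succ T m)
    have hind : IndepFun (arrival T m) (T (m + 1)) μ := by
      convert h.iIndepFun_T_s14.indepFun_sum_range_succ h.measT (m + 1)
      funext ω
      simp [arrival]
    rw [hsum, hind.map_add_eq_map_conv_map (h.measurable_arrival m) (h.measT _), map_arrival h m,
      h.expT, gammaMeasure_conv_expMeasure]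

lemma measure_arrival_le_s14 (h : Setup μ X T) (m : ℕ) (t : ℝ) :
    μ {ω | arrival T m ω ≤ t} = ∫⁻ u in Iic t, gammaPDF (m + 1) 1 u := by
  rw [← withDensity_apply _ measurableSet_Iic, ← gammaMeasure, ← h.map_arrival m,
    Measure.map_apply (h.measurable_arrival m) measurableSet_Iic]
  rfl

lemma ae_monotone_arrival (h : Setup μ X T) : ∀ᵐ ω ∂μ, Monotone fun k => arrival T k ω := by
  have hT : ∀ i, ∀ᵐ ω ∂μ, 0 ≤ T i ω := fun i => by
    refine ae_of_ae_map (h.measT i).aemeasurable ?_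
    rw [h.expT, ae_iff]
    simp only [not_le]
    exact (withDensity_apply _ measurableSet_Iio).trans (lintegral_gammaPDF_of_nonpos le_rfl)
  filter_upwards [ae_all_iff.2 hT] with ω hω
  exact monotone_nat_of_le_succ fun k => by
    rw [arrival_succ]
    linarith [hω (k + 1)]

lemma measure_firstAtLeast (h : Setup μ X T) (c : ℝ) (m : ℕ) :
    μ ((fun ω k => X k ω) ⁻¹' firstAtLeast c m) =
      μ {ω | X 0 ω < c} ^ m * μ {ω | c ≤ X 0 ω} := by
  set B : ℕ → Set ℝ := fun j => if j < m then Iio c else Ici c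
  have hB : ∀ j, MeasurableSet (B j) := fun j => by
    simp only [B]; split_ifs
    exacts [measurableSet_Iio, measurableSet_Ici]
  have hident : ∀ j s, MeasurableSet s → μ (X j ⁻¹' s) = μ (X 0 ⁻¹' s) := fun j s hs => by
    rw [← Measure.map_apply (h.measX j) hs, h.identX, Measure.map_apply (h.measX 0) hs]
  have hset :
      (fun ω k => X k ω) ⁻¹' firstAtLeast c m = ⋂ j ∈ Finset.range (m + 1), X j ⁻¹' B j := by
    ext ω
    simp only [firstAtLeast, B, mem_preimage, mem_ofPred_eq, mem_iInter, Finset.mem_range,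
      Nat.lt_succ_iff_lt_or_eq, or_imp, forall_and, forall_eq]
    simp +contextual
  rw [hset, h.iIndepFun_X_s14.meas_biInter fun j _ => ⟨B j, hB j, rfl⟩, Finset.prod_range_succ,
    Finset.prod_congr rfl fun j hj => by
      rw [hident j _ (hB j), show B j = Iio c from if_pos (Finset.mem_range.1 hj)],
    Finset.prod_const, Finset.card_range, hident m _ (hB m),
    show B m = Ici c from if_neg (lt_irrefl m)]
  rfl

lemma measure_firstAtLeast_inter_arrival_le (h : Setup μ X T) (c t : ℝ) (m : ℕ) :
    μ ((fun ω k => X k ω) ⁻¹' firstAtLeast c m ∩ {ω | arrival T m ω ≤ t}) =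
      μ {ω | X 0 ω < c} ^ m * μ {ω | c ≤ X 0 ω} * ∫⁻ u in Iic t, gammaPDF (m + 1) 1 u := by
  set S : Set (ℕ → ℝ) := {y | ∑ i ∈ Finset.range (m + 1), y i ≤ t}
  have hS : MeasurableSet S :=
    measurableSet_le (Finset.measurable_sum _ fun i _ => measurable_pi_apply i) measurable_const
  change μ ((fun ω k => X k ω) ⁻¹' firstAtLeast c m ∩ (fun ω k => T k ω) ⁻¹' S) = _
  rw [h.indepFun_seq.meas_inter ⟨_, measurableSet_firstAtLeast c m, rfl⟩ ⟨S, hS, rfl⟩,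
    h.measure_firstAtLeast, ← h.measure_arrival_le_s14]
  rfl

lemma measure_exists_arrival_le_and_le (h : Setup μ X T) (c t : ℝ) :
    μ {ω | ∃ k, arrival T k ω ≤ t ∧ c ≤ X k ω} =
      expMeasure (μ.real {ω | c ≤ X 0 ω}) (Iic t) := by
  have := h.prob
  have hqr : μ.real {ω | X 0 ω < c} + μ.real {ω | c ≤ X 0 ω} = 1 := by
    have : {ω | X 0 ω < c} = {ω | c ≤ X 0 ω}ᶜ := by ext; simp
    rw [this, probReal_compl_eq_one_sub (measurableSet_le measurable_const (h.measX 0))]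
    ring
  set q := μ.real {ω | X 0 ω < c}
  set r := μ.real {ω | c ≤ X 0 ω}
  set D : ℕ → Set Ω :=
    fun m => (fun ω k => X k ω) ⁻¹' firstAtLeast c m ∩ {ω | arrival T m ω ≤ t}
  have hmeasD : ∀ m, MeasurableSet (D m) := fun m =>
    (measurable_pi_lambda _ h.measX (measurableSet_firstAtLeast c m)).inter
      (measurableSet_le (h.measurable_arrival m) measurable_const)
  have hdisjD : Pairwise (Disjoint on D) := fun m m' hmm' =>
    ((pairwise_disjoint_firstAtLeast c hmm').preimage _).mono inter_subset_left inter_subset_left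
  have hae : {ω | ∃ k, arrival T k ω ≤ t ∧ c ≤ X k ω} =ᵐ[μ] ⋃ m, D m := by
    refine eventuallyEq_set.2 ?_
    filter_upwards [h.ae_monotone_arrival] with ω hω
    simpa [D] using exists_le_and_le_iff_exists_firstAtLeast (x := fun k => X k ω) hω c t
  have hD : ∀ m, μ (D m) = ENNReal.ofReal (q ^ m * r) * ∫⁻ u in Iic t, gammaPDF (m + 1) 1 u :=
    fun m => by
      rw [h.measure_firstAtLeast_inter_arrival_le, ENNReal.ofReal_mul (by positivity),
        ENNReal.ofReal_pow measureReal_nonneg, ofReal_measureReal, ofReal_measureReal]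
  rw [measure_congr hae, measure_iUnion hdisjD hmeasD, expMeasure, gammaMeasure,
    withDensity_apply _ measurableSet_Iic]
  simp_rw [hD, ← lintegral_const_mul _ (measurable_gammaPDF _ _)]
  rw [← lintegral_tsum fun m => ((measurable_gammaPDF _ _).const_mul _).aemeasurable]
  exact lintegral_congr
    (tsum_geometric_mul_gammaPDF_eq_exponentialPDF measureReal_nonneg measureReal_nonneg hqr)

lemma measurableSet_exists_arrival_le_and_le (h : Setup μ X T) (c t : ℝ) :
    MeasurableSet {ω | ∃ k, arrival T k ω ≤ t ∧ c ≤ X k ω} := by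
  simp only [ofPred_exists, ofPred_and]
  exact MeasurableSet.iUnion fun k =>
    (measurableSet_le (h.measurable_arrival k) measurable_const).inter
      (measurableSet_le measurable_const (h.measX k))

end Setup

end Measure

end ProphetPoisson

open ProphetPoisson in
theorem Mval_eq_sum_finite_values_general
    {Ω : Type*} [MeasurableSpace Ω] (μ : Measure Ω) (X T : ℕ → Ω → ℝ)
    (hsetup : Setup μ X T)
    (n : ℕ) (a : ℕ → ℝ)
    (ha0 : a 0 = 0) (ha1 : 0 ≤ a 1)
    (hmono : ∀ i, 1 ≤ i → i < n → a i < a (i + 1))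
    (hvals : ∀ k ω, ∃ j, 1 ≤ j ∧ j ≤ n ∧ X k ω = a j)
    (t : ℝ) (ht : 0 ≤ t) :
    Mval μ X T t =
      ∑ i ∈ Finset.Icc 1 n,
        (a i - a (i - 1)) * (1 - Real.exp (-((μ {ω | a i ≤ X 0 ω}).toReal * t))) := by
  have := hsetup.prob
  have ha : MonotoneOn a (Iic n) := monotoneOn_of_le_add_one ordConnected_Iic fun i _ _ hi => by
    rcases Nat.eq_zero_or_pos i with rfl | hi0
    · rwa [ha0]
    · exact (hmono i hi0 (Nat.lt_of_succ_le (mem_Iic.1 hi))).le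
  have hX : ∀ ω k, X k ω ∈ a '' Iic n := fun ω k => by
    obtain ⟨j, -, hj, hXj⟩ := hvals k ω
    exact ⟨j, mem_Iic.2 hj, hXj.symm⟩
  have hA := hsetup.measurableSet_exists_arrival_le_and_le
  simp_rw [Mval, maxByT_eq_sum_indicator ha ha0 (hX _)]
  rw [integral_finsetSum _ fun i _ => (integrable_const _).indicator (hA _ t)]
  refine Finset.sum_congr rfl fun i _ => ?_
  rw [integral_indicator_const _ (hA _ t), smul_eq_mul, mul_comm, measureReal_def,
    hsetup.measure_exists_arrival_le_and_le, ← measureReal_def,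
    expMeasure_real_Iic measureReal_nonneg ht, measureReal_def]

open ProphetPoisson in
/-- if `X` takes only the values `a 1 < a 2 < ⋯ < a n` with `a 1 ≥ 0`, and
`a 0 = 0`, `rᵢ = P(X ≥ a i)`, then `M(t) = ∑_{i=1}^n (a i − a (i−1))·(1 − e^{−rᵢ t})`
for all `t ≥ 0`. -/
theorem Mval_eq_sum_finite_values
    {Ω : Type*} [MeasurableSpace Ω] (μ : Measure Ω) (X T : ℕ → Ω → ℝ)
    (hsetup : Setup μ X T)
    (n : ℕ) (hn : 1 ≤ n) (a : ℕ → ℝ)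
    (ha0 : a 0 = 0) (ha1 : 0 ≤ a 1)
    (hmono : ∀ i, 1 ≤ i → i < n → a i < a (i + 1))
    (hvals : ∀ k ω, ∃ j, 1 ≤ j ∧ j ≤ n ∧ X k ω = a j)
    (t : ℝ) (ht : 0 ≤ t) :
    Mval μ X T t =
      ∑ i ∈ Finset.Icc 1 n,
        (a i - a (i - 1)) * (1 - Real.exp (-((μ {ω | a i ≤ X 0 ω}).toReal * t))) :=
  Mval_eq_sum_finite_values_general μ X T hsetup n a ha0 ha1 hmono hvals t ht
end
end
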